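/- Let 1 < p < s < ∞. There exists c(p) > 0 such that for every norm N on ℝⁿ that is differentiable away from 0 and all ξ, η ∈ ℝⁿ with ξ ≠ 0, the Bregman distance of N^p satisfies: N(ξ+η)^p − N(ξ)^p − p·N(ξ)^{p−1}·(∇N(ξ)·η) ≥ c(p)·|N(ξ+η) − N(ξ)|²·(|N(ξ+η) − N(ξ)| + N(ξ))^{p−2}. -/

import Mathlib

open Real

lemma rpow_tangent_le {p a x : ℝ} (hp : 1 ≤ p) (ha : 0 < a) (hx : 0 ≤ x) :
    a ^ p + p * a ^ (p - 1) * (x - a) ≤ x ^ p := by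
  have hs : -1 ≤ x / a - 1 := by
    have : 0 ≤ x / a := div_nonneg hx ha.le
    linarith
  have hB := one_add_mul_self_le_rpow_one_add hs hp
  have h1 : (1 + (x / a - 1)) = x / a := by ring
  rw [h1, Real.div_rpow hx ha.le] at hB
  have hap : (0:ℝ) < a ^ p := Real.rpow_pos_of_pos ha p
  have h2 : a ^ p * (1 + p * (x / a - 1)) ≤ x ^ p := by
    rw [mul_comm, ← le_div_iff₀ hap]
    exact hB
  have h3 : a ^ (p - 1) = a ^ p / a := Real.rpow_sub_one ha.ne' p
  calc a ^ p + p * a ^ (p - 1) * (x - a)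
      = a ^ p * (1 + p * (x / a - 1)) := by rw [h3]; field_simp
    _ ≤ x ^ p := h2

lemma rpow_diff_ge_of_one_le {q x y : ℝ} (hq : 1 ≤ q) (hy : 0 < y) (hxy : y ≤ x) :
    x ^ (q - 1) * (x - y) ≤ x ^ q - y ^ q := by
  have hx : 0 < x := hy.trans_le hxy
  have h1 : y ^ (q - 1) ≤ x ^ (q - 1) :=
    Real.rpow_le_rpow hy.le hxy (by linarith)
  have hxq : x ^ q = x ^ (q - 1) * x := by
    rw [Real.rpow_sub_one hx.ne']; field_simp
  have hyq : y ^ q = y ^ (q - 1) * y := by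
    rw [Real.rpow_sub_one hy.ne']; field_simp
  nlinarith [mul_le_mul_of_nonneg_right h1 hy.le]

lemma rpow_diff_ge_of_le_one {q x y : ℝ} (hq0 : 0 ≤ q) (hq : q ≤ 1) (hy : 0 < y) (hxy : y ≤ x) :
    q * x ^ (q - 1) * (x - y) ≤ x ^ q - y ^ q := by
  have hx : 0 < x := hy.trans_le hxy
  have hs : -1 ≤ y / x - 1 := by
    have : 0 ≤ y / x := le_of_lt (div_pos hy hx)
    linarith
  have hB := rpow_one_add_le_one_add_mul_self hs hq0 hq
  have h1 : (1 + (y / x - 1)) = y / x := by ring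
  rw [h1, Real.div_rpow hy.le hx.le] at hB
  have hxp : (0:ℝ) < x ^ q := Real.rpow_pos_of_pos hx q
  have h2 : y ^ q ≤ x ^ q * (1 + q * (y / x - 1)) := by
    rw [div_le_iff₀ hxp] at hB; linarith [hB]
  have h3 : x ^ (q - 1) = x ^ q / x := Real.rpow_sub_one hx.ne' q
  have h4 : x ^ q * (1 + q * (y / x - 1)) = x ^ q - q * x ^ (q - 1) * (x - y) := by
    rw [h3]; field_simp; ring
  linarith [h2, h4.symm.le]

lemma asm1 {t X d u : ℝ} (hX : 0 ≤ X) (hd : 0 ≤ d) (ht : 0 < t)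
    (e1 : X / t * (d / 2) ≤ u) :
    1 / (8 * t) * d ^ 2 * X ≤ u * (d / 2) := by
  have e2 := mul_le_mul_of_nonneg_right e1 (by positivity : (0:ℝ) ≤ d / 2)
  have h1 : X / t * (d / 2) * (d / 2) = X * d ^ 2 / (4 * t) := by ring
  have h2 : 1 / (8 * t) * d ^ 2 * X = X * d ^ 2 / (8 * t) := by ring
  have h3 : X * d ^ 2 / (8 * t) ≤ X * d ^ 2 / (4 * t) := by
    apply div_le_div_of_nonneg_left (by positivity) (by linarith) (by linarith)
  linarith

lemma asm2 {c P X d u : ℝ} (hc : 0 ≤ c) (hX : 0 ≤ X) (hd : 0 ≤ d) (hP : (4:ℝ) ≤ P)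
    (e1 : c * X * (d / 2) ≤ u) :
    c / P * d ^ 2 * X ≤ u * (d / 2) := by
  have e2 := mul_le_mul_of_nonneg_right e1 (by positivity : (0:ℝ) ≤ d / 2)
  have h1 : c * X * (d / 2) * (d / 2) = c * X * d ^ 2 / 4 := by ring
  have h2 : c / P * d ^ 2 * X = c * X * d ^ 2 / P := by ring
  have h3 : c * X * d ^ 2 / P ≤ c * X * d ^ 2 / 4 := by
    apply div_le_div_of_nonneg_left (by positivity) (by norm_num) hP
  linarith

lemma core_ineq (q : ℝ) (hq : 0 < q) {a b : ℝ} (ha : 0 < a) (hb : 0 ≤ b) :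
    min q 1 / (2:ℝ) ^ (q + 2) * (b - a) ^ 2 * (|b - a| + a) ^ (q - 1) ≤
      (((a + b) / 2) ^ q - a ^ q) * ((b - a) / 2) := by
  set m : ℝ := (a + b) / 2 with hm_def
  set M : ℝ := |b - a| + a with hM_def
  have hm : 0 < m := by show 0 < (a + b) / 2; linarith
  have hM : 0 < M := by have := abs_nonneg (b - a); show 0 < |b - a| + a; linarith
  have hXpos : (0:ℝ) < M ^ (q - 1) := Real.rpow_pos_of_pos hM _
  have h8 : (2:ℝ) ^ (q + 2) = 8 * 2 ^ (q - 1) := by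
    rw [show q + 2 = 3 + (q - 1) by ring, Real.rpow_add two_pos,
      show (3:ℝ) = ((3:ℕ):ℝ) by norm_num, Real.rpow_natCast]
    norm_num
  have h4 : (4:ℝ) ≤ 2 ^ (q + 2) := by
    have h2 : (2:ℝ) ^ ((2:ℕ):ℝ) ≤ 2 ^ (q + 2) :=
      Real.rpow_le_rpow_of_exponent_le one_le_two (by push_cast; linarith)
    rw [Real.rpow_natCast] at h2
    norm_num at h2
    exact h2
  have htpos : (0:ℝ) < 2 ^ (q - 1) := Real.rpow_pos_of_pos two_pos _
  rcases le_or_gt a b with hab | hab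
  · -- a ≤ b
    have habs : |b - a| = b - a := abs_of_nonneg (by linarith)
    have hMb : M = b := by rw [hM_def, habs]; ring
    have ham : a ≤ m := by show a ≤ (a + b) / 2; linarith
    have hd : 0 ≤ b - a := by linarith
    rcases le_or_gt 1 q with hq1 | hq1
    · -- 1 ≤ q
      rw [min_eq_right hq1, h8]
      have hk : m ^ (q - 1) * (m - a) ≤ m ^ q - a ^ q :=
        rpow_diff_ge_of_one_le hq1 ha ham
      have hMm : M / 2 ≤ m := by rw [hMb]; show b / 2 ≤ (a + b) / 2; linarith
      have hr : (M / 2) ^ (q - 1) ≤ m ^ (q - 1) :=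
        Real.rpow_le_rpow (by positivity) hMm (by linarith)
      have hsplit : (M / 2) ^ (q - 1) = M ^ (q - 1) / 2 ^ (q - 1) :=
        Real.div_rpow hM.le (by norm_num) _
    -- e1
      have e1 : M ^ (q - 1) / 2 ^ (q - 1) * ((b - a) / 2) ≤ m ^ q - a ^ q := by
        have hma : m - a = (b - a) / 2 := by show _ = _; simp only [hm_def]; ring
        have := mul_le_mul_of_nonneg_right (hsplit ▸ hr) (by linarith : (0:ℝ) ≤ (b - a) / 2)
        rw [← hma] at this ⊢
        exact this.trans hk
      exact asm1 hXpos.le hd htpos e1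
    · -- q < 1
      rw [min_eq_left hq1.le]
      have hk : q * m ^ (q - 1) * (m - a) ≤ m ^ q - a ^ q :=
        rpow_diff_ge_of_le_one hq.le hq1.le ha ham
      have hmM : m ≤ M := by rw [hMb]; show (a + b) / 2 ≤ b; linarith
      have hr : M ^ (q - 1) ≤ m ^ (q - 1) :=
        Real.rpow_le_rpow_of_nonpos hm hmM (by linarith)
      have e1 : q * M ^ (q - 1) * ((b - a) / 2) ≤ m ^ q - a ^ q := by
        have hma : m - a = (b - a) / 2 := by show _ = _; simp only [hm_def]; ring
        have h5 : q * M ^ (q - 1) * ((b - a) / 2) ≤ q * m ^ (q - 1) * ((b - a) / 2) := by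
          apply mul_le_mul_of_nonneg_right _ (by linarith : (0:ℝ) ≤ (b - a) / 2)
          exact mul_le_mul_of_nonneg_left hr hq.le
        rw [hma] at hk
        exact h5.trans hk
      exact asm2 hq.le hXpos.le hd h4 e1
  · -- b < a
    have habs : |b - a| = a - b := by rw [abs_sub_comm]; exact abs_of_nonneg (by linarith)
    have hMab : M = 2 * a - b := by rw [hM_def, habs]; ring
    have hma : m ≤ a := by show (a + b) / 2 ≤ a; linarith
    have hd : 0 ≤ a - b := by linarith
    have hgoal2 : (m ^ q - a ^ q) * ((b - a) / 2) = (a ^ q - m ^ q) * ((a - b) / 2) := by ring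
    have hgoal1 : (b - a) ^ 2 = (a - b) ^ 2 := by ring
    rw [hgoal1, hgoal2]
    rcases le_or_gt 1 q with hq1 | hq1
    · rw [min_eq_right hq1, h8]
      have hk : a ^ (q - 1) * (a - m) ≤ a ^ q - m ^ q :=
        rpow_diff_ge_of_one_le hq1 hm hma
      have hMm : M / 2 ≤ a := by rw [hMab]; linarith
      have hr : (M / 2) ^ (q - 1) ≤ a ^ (q - 1) :=
        Real.rpow_le_rpow (by positivity) hMm (by linarith)
      have hsplit : (M / 2) ^ (q - 1) = M ^ (q - 1) / 2 ^ (q - 1) :=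
        Real.div_rpow hM.le (by norm_num) _
      have e1 : M ^ (q - 1) / 2 ^ (q - 1) * ((a - b) / 2) ≤ a ^ q - m ^ q := by
        have ham2 : a - m = (a - b) / 2 := by show _ = _; simp only [hm_def]; ring
        have := mul_le_mul_of_nonneg_right (hsplit ▸ hr) (by linarith : (0:ℝ) ≤ (a - b) / 2)
        rw [← ham2] at this ⊢
        exact this.trans hk
      exact asm1 hXpos.le hd htpos e1
    · rw [min_eq_left hq1.le]
      have hk : q * a ^ (q - 1) * (a - m) ≤ a ^ q - m ^ q :=
        rpow_diff_ge_of_le_one hq.le hq1.le hm hma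
      have haM : a ≤ M := by rw [hMab]; linarith
      have hr : M ^ (q - 1) ≤ a ^ (q - 1) :=
        Real.rpow_le_rpow_of_nonpos ha haM (by linarith)
      have e1 : q * M ^ (q - 1) * ((a - b) / 2) ≤ a ^ q - m ^ q := by
        have ham2 : a - m = (a - b) / 2 := by show _ = _; simp only [hm_def]; ring
        have h5 : q * M ^ (q - 1) * ((a - b) / 2) ≤ q * a ^ (q - 1) * ((a - b) / 2) := by
          apply mul_le_mul_of_nonneg_right _ (by linarith : (0:ℝ) ≤ (a - b) / 2)
          exact mul_le_mul_of_nonneg_left hr hq.le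
        rw [ham2] at hk
        exact h5.trans hk
      exact asm2 hq.le hXpos.le hd h4 e1

lemma one_dim (p : ℝ) (hp : 1 < p) {a b : ℝ} (ha : 0 < a) (hb : 0 ≤ b) :
    p * min (p - 1) 1 / (2:ℝ) ^ (p + 1) * |b - a| ^ 2 * (|b - a| + a) ^ (p - 2) ≤
      b ^ p - a ^ p - p * a ^ (p - 1) * (b - a) := by
  have hm : 0 < (a + b) / 2 := by linarith
  have h1 : ((a + b) / 2) ^ p + p * ((a + b) / 2) ^ (p - 1) * (b - (a + b) / 2) ≤ b ^ p :=
    rpow_tangent_le hp.le hm hb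
  have h2 : a ^ p + p * a ^ (p - 1) * ((a + b) / 2 - a) ≤ ((a + b) / 2) ^ p :=
    rpow_tangent_le hp.le ha (by linarith)
  have hcore := core_ineq (p - 1) (by linarith) ha hb
  have hmul := mul_le_mul_of_nonneg_left hcore (by linarith : (0:ℝ) ≤ p)
  have hsq : |b - a| ^ 2 = (b - a) ^ 2 := sq_abs _
  rw [hsq, show p + 1 = (p - 1) + 2 by ring, show p - 2 = (p - 1) - 1 by ring]
  have hD : p * ((((a + b) / 2) ^ (p - 1) - a ^ (p - 1)) * ((b - a) / 2)) ≤
      b ^ p - a ^ p - p * a ^ (p - 1) * (b - a) := by nlinarith [h1, h2]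
  have heq : p * (min (p - 1) 1 / 2 ^ (p - 1 + 2) * (b - a) ^ 2 * (|b - a| + a) ^ (p - 1 - 1)) =
      p * min (p - 1) 1 / 2 ^ (p - 1 + 2) * (b - a) ^ 2 * (|b - a| + a) ^ (p - 1 - 1) := by ring
  linarith [hmul, hD, heq.le, heq.ge]

/-- One-dimensional lower bound for the Bregman distance of `N^p` along the values of a
differentiable norm `N`, for `1 < p < s`. -/
theorem bregman_norm_pow_lower (p s : ℝ) (hp : 1 < p) (hps : p < s) :
    ∃ c : ℝ, 0 < c ∧
      ∀ (n : ℕ) (N : (Fin n → ℝ) → ℝ),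
        (∀ v, 0 ≤ N v) → (∀ v, N v = 0 ↔ v = 0) →
        (∀ v w, N (v + w) ≤ N v + N w) →
        (∀ (t : ℝ) (v), N (t • v) = |t| * N v) →
        (∀ v, v ≠ 0 → DifferentiableAt ℝ N v) →
        ∀ ξ η : Fin n → ℝ, ξ ≠ 0 →
          c * |N (ξ + η) - N ξ| ^ 2 * (|N (ξ + η) - N ξ| + N ξ) ^ (p - 2) ≤
            N (ξ + η) ^ p - N ξ ^ p - p * N ξ ^ (p - 1) * (fderiv ℝ N ξ η) := by
  refine ⟨p * min (p - 1) 1 / (2:ℝ) ^ (p + 1), ?_, ?_⟩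
  · apply div_pos
    · exact mul_pos (by linarith) (lt_min (by linarith) one_pos)
    · exact Real.rpow_pos_of_pos two_pos _
  intro n N hnn hzero htri hhom hdiff ξ η hξ
  set a : ℝ := N ξ with ha_def
  set b : ℝ := N (ξ + η) with hb_def
  have ha : 0 < a := by
    rcases (hnn ξ).lt_or_eq with h | h
    · exact h
    · exact absurd ((hzero ξ).mp h.symm) hξ
  have hb : 0 ≤ b := hnn _
  -- derivative bound:  fderiv ℝ N ξ η ≤ b - a
  have hL : (fderiv ℝ N ξ) η ≤ b - a := by
    have hder : HasDerivAt (fun t : ℝ => N (ξ + t • η)) ((fderiv ℝ N ξ) η) 0 := by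
      have h2 : HasDerivAt (fun t : ℝ => ξ + t • η) η 0 := by
        simpa using ((hasDerivAt_id (0:ℝ)).smul_const η).const_add ξ
      have h1 : HasFDerivAt N (fderiv ℝ N ξ) (ξ + (0:ℝ) • η) := by
        simpa using (hdiff ξ hξ).hasFDerivAt
      exact h1.comp_hasDerivAt 0 h2
    have hslope : Filter.Tendsto (slope (fun t : ℝ => N (ξ + t • η)) 0)
        (nhdsWithin 0 (Set.Ioi 0)) (nhds ((fderiv ℝ N ξ) η)) :=
      (hasDerivAt_iff_tendsto_slope.mp hder).mono_left
        (nhdsWithin_mono 0 (fun x hx => ne_of_gt hx))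
    refine le_of_tendsto hslope ?_
    filter_upwards [Ioo_mem_nhdsGT one_pos] with t ht
    obtain ⟨ht0, ht1⟩ := ht
    have hconv : N (ξ + t • η) ≤ (1 - t) * a + t * b := by
      have hco : ξ + t • η = (1 - t) • ξ + t • (ξ + η) := by
        rw [sub_smul, one_smul, smul_add]; abel
      rw [hco]
      calc N ((1 - t) • ξ + t • (ξ + η)) ≤ N ((1 - t) • ξ) + N (t • (ξ + η)) := htri _ _
        _ = |1 - t| * N ξ + |t| * N (ξ + η) := by rw [hhom, hhom]
        _ = (1 - t) * a + t * b := by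
            rw [abs_of_nonneg (by linarith : (0:ℝ) ≤ 1 - t), abs_of_pos ht0, ha_def, hb_def]
    have hphi0 : N (ξ + (0:ℝ) • η) = a := by simp [ha_def]
    rw [slope_def_field]
    rw [hphi0]
    rw [div_le_iff₀ (by simpa using ht0)]
    have : N (ξ + t • η) - a ≤ (b - a) * t := by nlinarith [hconv]
    simpa using this
  have hone := one_dim p hp ha hb
  have hmono : p * a ^ (p - 1) * (fderiv ℝ N ξ η) ≤ p * a ^ (p - 1) * (b - a) := by
    apply mul_le_mul_of_nonneg_left hL
    positivity
  linarith [hone, hmono]
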